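/- arXiv:1901.06664 — 8 statements merged into one kernel-verified Lean document; each statement's English description precedes it below -/
import Mathlib

section
/- Let (L,∨,∧,1) be a lattice with greatest element 1 and let * be a binary operation on L. Then (L,∨,∧,*) is a sectionally pseudocomplemented lattice if and only if (L,∨,∧,⊙,→,1) with ⊙ := ∧ and → := * is a divisible relatively residuated lattice. -/
/-! With `⊙ := ⊓`, commutativity, neutrality of `⊤` and monotonicity hold in every lattice.
Divisibility says that `a * b` belongs to `{x | (a ⊔ b) ⊓ x = b}`, and relative adjointness with
`c := x` says that every such `x` lies below `a * b`, since then `x ⊔ b = x`. -/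

section SectionalPseudocomplement

variable {L : Type*} [Lattice L] {a b s : L}

theorem inf_sup_le_iff_sup_le_of_isGreatest (hs : IsGreatest {x : L | (a ⊔ b) ⊓ x = b} s)
    (c : L) : (a ⊔ b) ⊓ (c ⊔ b) ≤ b ↔ c ⊔ b ≤ s := by
  constructor
  · intro hle
    exact hs.2 (le_antisymm hle (le_inf le_sup_right le_sup_right))
  · intro hle
    calc (a ⊔ b) ⊓ (c ⊔ b) ≤ (a ⊔ b) ⊓ s := inf_le_inf_left _ hle
      _ = b := hs.1

theorem isGreatest_of_inf_sup_le_iff_sup_le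
    (hadj : ∀ c : L, (a ⊔ b) ⊓ (c ⊔ b) ≤ b ↔ c ⊔ b ≤ s) (hdiv : (a ⊔ b) ⊓ s = b) :
    IsGreatest {x : L | (a ⊔ b) ⊓ x = b} s := by
  refine ⟨hdiv, fun x hx => ?_⟩
  have hbx : b ≤ x := hx ▸ inf_le_right
  have hx_le : (a ⊔ b) ⊓ (x ⊔ b) ≤ b := by
    rw [sup_eq_left.mpr hbx]
    exact hx.le
  exact le_sup_left.trans ((hadj x).1 hx_le)

end SectionalPseudocomplement

/-- A lattice with 1 and binary operation * is sectionally
pseudocomplemented iff (L,∨,∧,⊓,*,1) is a divisible relatively residuated lattice. -/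
theorem stmt_0 {L : Type*} [Lattice L] [OrderTop L] (star : L → L → L) :
    (∀ a b : L, IsGreatest {x : L | (a ⊔ b) ⊓ x = b} (star a b)) ↔
      ((∀ x y : L, x ⊓ y = y ⊓ x) ∧
       (∀ x : L, x ⊓ (⊤ : L) = x) ∧
       (∀ a b c : L, a ≤ b → a ⊓ c ≤ b ⊓ c) ∧
       (∀ a b c : L, (a ⊔ b) ⊓ (c ⊔ b) ≤ b ↔ c ⊔ b ≤ star a b) ∧
       (∀ x y : L, (x ⊔ y) ⊓ star x y = y)) := by
  constructor
  · intro h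
    exact ⟨inf_comm, inf_top_eq, fun _ _ c hab => inf_le_inf_right c hab,
      fun a b => inf_sup_le_iff_sup_le_of_isGreatest (h a b), fun x y => (h x y).1⟩
  · rintro ⟨-, -, -, hadj, hdiv⟩ a b
    exact isGreatest_of_inf_sup_le_iff_sup_le (hadj a b) (hdiv a b)
end

section
/- Let (L,∨,∧,1) be a finite lattice with greatest element 1. Then the following are equivalent: (i) there exists a binary operation * on L such that (L,∨,∧,⊙,→,1) with ⊙ := ∧ and → := * is a relatively residuated lattice; (ii) (L,∨,∧) is meet-semidistributive. -/
/-!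
Relative adjointness for `⊙ = ⊓` says precisely that `a → b` is the greatest element of the
lower set `S a b = {x | (a ⊔ b) ⊓ (x ⊔ b) ≤ b}`, and meet-semidistributivity says precisely that
every `S a b` is closed under joins. A lower set with a greatest element is join-closed, and
conversely, in a finite lattice, the nonempty join-closed set `S a b ∋ b` has a greatest element.
-/

theorem IsLowerSet.supClosed_of_isGreatest {α : Type*} [SemilatticeSup α] {s : Set α} {t : α}
    (hs : IsLowerSet s) (ht : IsGreatest s t) : SupClosed s :=
  fun _ hx _ hy => hs (sup_le (ht.2 hx) (ht.2 hy)) ht.1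

theorem SupClosed.exists_isGreatest {α : Type*} [SemilatticeSup α] {s : Set α}
    (hs : SupClosed s) (hfin : s.Finite) (hne : s.Nonempty) : ∃ t, IsGreatest s t := by
  obtain ⟨m, hm⟩ := hfin.exists_maximal hne
  exact ⟨m, hm.prop, fun x hx => le_sup_right.trans (hm.le_of_ge (hs hm.prop hx) le_sup_left)⟩

namespace Lattice

def MeetSemidistrib (L : Type*) [Lattice L] : Prop :=
  ∀ a b c : L, a ⊓ b = a ⊓ c → a ⊓ (b ⊔ c) = a ⊓ b

variable {L : Type*} [Lattice L]

def relAnnihilator (a b : L) : Set L := {x | (a ⊔ b) ⊓ (x ⊔ b) ≤ b}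

theorem self_mem_relAnnihilator (a b : L) : b ∈ relAnnihilator a b := by
  simp [relAnnihilator]

theorem isLowerSet_relAnnihilator (a b : L) : IsLowerSet (relAnnihilator a b) :=
  fun _ _ hyx hx => (inf_le_inf_left _ (sup_le_sup_right hyx b)).trans hx

theorem relAdjoint_iff_isGreatest (a b t : L) :
    (∀ c, (a ⊔ b) ⊓ (c ⊔ b) ≤ b ↔ c ⊔ b ≤ t) ↔ IsGreatest (relAnnihilator a b) t := by
  constructor
  · intro h
    have hbt : b ≤ t := by simpa using (h b).1 (self_mem_relAnnihilator a b)
    exact ⟨(h t).2 (sup_le le_rfl hbt), fun c hc => le_sup_left.trans ((h c).1 hc)⟩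
  · intro ht c
    exact ⟨fun hc => sup_le (ht.2 hc) (ht.2 (self_mem_relAnnihilator a b)),
      fun hc => isLowerSet_relAnnihilator a b (le_sup_left.trans hc) ht.1⟩

theorem meetSemidistrib_iff_supClosed_relAnnihilator :
    MeetSemidistrib L ↔ ∀ a b : L, SupClosed (relAnnihilator a b) := by
  have mem_iff {a b x : L} : x ∈ relAnnihilator a b ↔ (a ⊔ b) ⊓ (x ⊔ b) = b :=
    ⟨fun hx => le_antisymm hx (le_inf le_sup_right le_sup_right), le_of_eq⟩
  constructor
  · intro h a b x hx y hy
    rw [mem_iff] at hx hy ⊢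
    have := h (a ⊔ b) (x ⊔ b) (y ⊔ b) (hx.trans hy.symm)
    rwa [sup_sup_sup_comm, sup_idem, hx] at this
  · intro h a b c hbc
    -- With `d = a ⊓ b = a ⊓ c`, both `b` and `c` lie in `relAnnihilator a d`.
    have hdb : a ⊓ b ≤ b := inf_le_right
    have hdc : a ⊓ b ≤ c := hbc ▸ inf_le_right
    have hmem {x : L} (hx : a ⊓ b ≤ x) (hax : a ⊓ x ≤ a ⊓ b) : x ∈ relAnnihilator a (a ⊓ b) := by
      simpa [relAnnihilator, sup_eq_left.mpr hx] using hax
    have := h a (a ⊓ b) (hmem hdb le_rfl) (hmem hdc hbc.ge)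
    simp only [relAnnihilator, Set.mem_ofPred_eq, sup_inf_self,
      sup_eq_left.mpr (hdb.trans le_sup_left)] at this
    exact le_antisymm this (inf_le_inf_left a le_sup_left)

end Lattice

open Lattice in
/-- For a finite lattice with 1, existence of * making
(L,∨,∧,⊓,*,1) relatively residuated is equivalent to meet-semidistributivity. -/
theorem stmt_1 {L : Type*} [Lattice L] [OrderTop L] [Fintype L] :
    (∃ star : L → L → L,
       (∀ x y : L, x ⊓ y = y ⊓ x) ∧
       (∀ x : L, x ⊓ (⊤ : L) = x) ∧
       (∀ a b c : L, a ≤ b → a ⊓ c ≤ b ⊓ c) ∧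
       (∀ a b c : L, (a ⊔ b) ⊓ (c ⊔ b) ≤ b ↔ c ⊔ b ≤ star a b)) ↔
      (∀ a b c : L, a ⊓ b = a ⊓ c → a ⊓ (b ⊔ c) = a ⊓ b) := by
  change _ ↔ MeetSemidistrib L
  rw [meetSemidistrib_iff_supClosed_relAnnihilator]
  constructor
  · rintro ⟨star, -, -, -, hadj⟩ a b
    exact (isLowerSet_relAnnihilator a b).supClosed_of_isGreatest
      ((relAdjoint_iff_isGreatest a b _).1 (hadj a b))
  · intro h
    choose star hstar using fun a b : L =>
      (h a b).exists_isGreatest (Set.toFinite _) ⟨b, self_mem_relAnnihilator a b⟩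
    exact ⟨star, inf_comm, inf_top_eq, fun _ _ c hab => inf_le_inf_right c hab,
      fun a b => (relAdjoint_iff_isGreatest a b _).2 (hstar a b)⟩
end

section
/- In every relatively residuated lattice (L,∨,∧,⊙,→,1), the identity x→y = (x∨y)→y holds for all x,y ∈ L. -/
/-!
Both `x → y` and `(x ∨ y) → y` lie above `y`, because `z ⊙ y ≤ ⊤ ⊙ y = y`. An element above `y`
is determined by the elements `c ∨ y` below it, and by relative adjointness `c ∨ y ≤ a → y`
says `(a ∨ y) ⊙ (c ∨ y) ≤ y`, a condition that does not change when `a` is replaced by `a ∨ y`.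
-/

section RelativelyResiduated

variable {L : Type*} [Lattice L] {mul imp : L → L → L}

theorem mul_le_right_of_top_neutral [OrderTop L] (hcomm : ∀ x y : L, mul x y = mul y x)
    (hone : ∀ x : L, mul x ⊤ = x) (hmono : ∀ a b c : L, a ≤ b → mul a c ≤ mul b c)
    (z y : L) : mul z y ≤ y :=
  calc mul z y ≤ mul ⊤ y := hmono z ⊤ y le_top
    _ = mul y ⊤ := hcomm ⊤ y
    _ = y := hone y

theorem le_imp_self (hadj : ∀ a b c : L, mul (a ⊔ b) (c ⊔ b) ≤ b ↔ c ⊔ b ≤ imp a b)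
    {b : L} (hle : ∀ z : L, mul z b ≤ b) (a : L) : b ≤ imp a b := by
  have h := hadj a b b
  rw [sup_idem] at h
  exact h.1 (hle _)

theorem sup_le_imp_iff_sup_le_imp_sup
    (hadj : ∀ a b c : L, mul (a ⊔ b) (c ⊔ b) ≤ b ↔ c ⊔ b ≤ imp a b) (a b c : L) :
    c ⊔ b ≤ imp a b ↔ c ⊔ b ≤ imp (a ⊔ b) b := by
  rw [← hadj, ← hadj, sup_right_idem]

end RelativelyResiduated

/-- In every relatively residuated lattice, x→y = (x∨y)→y. -/
theorem stmt_7 {L : Type*} [Lattice L] [OrderTop L] (mul imp : L → L → L)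
    (hcomm : ∀ x y : L, mul x y = mul y x)
    (hone : ∀ x : L, mul x ⊤ = x)
    (hmono : ∀ a b c : L, a ≤ b → mul a c ≤ mul b c)
    (hadj : ∀ a b c : L, mul (a ⊔ b) (c ⊔ b) ≤ b ↔ c ⊔ b ≤ imp a b) :
    ∀ x y : L, imp x y = imp (x ⊔ y) y := by
  intro x y
  have hy : ∀ a, y ≤ imp a y := le_imp_self hadj (mul_le_right_of_top_neutral hcomm hone hmono · y)
  refine eq_of_forall_le_iff fun c => ?_
  calc c ≤ imp x y ↔ c ⊔ y ≤ imp x y := by simp [hy]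
    _ ↔ c ⊔ y ≤ imp (x ⊔ y) y := sup_le_imp_iff_sup_le_imp_sup hadj x y c
    _ ↔ c ≤ imp (x ⊔ y) y := by simp [hy]
end

section
/- In every relatively residuated lattice (L,∨,∧,⊙,→,1), for all a,b,c ∈ L, if a ≤ b then b→c ≤ a→c. -/
/-! Since `⊤` is the unit and `⊙` is monotone, `x ⊙ c ≤ c`, so relative adjointness gives
`c ≤ x → c`; hence `b → c = (b → c) ∨ c` satisfies the modus ponens inequality
`(b ∨ c) ⊙ ((b → c) ∨ c) ≤ c`. Shrinking `b` to `a` keeps this inequality by monotonicity,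
and adjointness read backwards yields `b → c ≤ a → c`. -/

namespace RelativelyResiduated

variable {L : Type*} [Lattice L] [OrderTop L] {mul imp : L → L → L}

theorem mul_le_right (hcomm : ∀ x y : L, mul x y = mul y x) (hone : ∀ x : L, mul x ⊤ = x)
    (hmono : ∀ a b c : L, a ≤ b → mul a c ≤ mul b c) (x c : L) : mul x c ≤ c :=
  calc mul x c ≤ mul ⊤ c := hmono _ _ _ le_top
    _ = c := by rw [hcomm, hone]

theorem le_imp (hcomm : ∀ x y : L, mul x y = mul y x) (hone : ∀ x : L, mul x ⊤ = x)
    (hmono : ∀ a b c : L, a ≤ b → mul a c ≤ mul b c)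
    (hadj : ∀ a b c : L, mul (a ⊔ b) (c ⊔ b) ≤ b ↔ c ⊔ b ≤ imp a b) (x c : L) :
    c ≤ imp x c := by
  simpa using (hadj x c c).mp (by simpa using mul_le_right hcomm hone hmono (x ⊔ c) c)

theorem mul_imp_le (hcomm : ∀ x y : L, mul x y = mul y x) (hone : ∀ x : L, mul x ⊤ = x)
    (hmono : ∀ a b c : L, a ≤ b → mul a c ≤ mul b c)
    (hadj : ∀ a b c : L, mul (a ⊔ b) (c ⊔ b) ≤ b ↔ c ⊔ b ≤ imp a b) (x c : L) :
    mul (x ⊔ c) (imp x c ⊔ c) ≤ c :=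
  (hadj x c (imp x c)).mpr (sup_le le_rfl (le_imp hcomm hone hmono hadj x c))

end RelativelyResiduated

/-- In every relatively residuated lattice, a ≤ b implies b→c ≤ a→c. -/
theorem stmt_9 {L : Type*} [Lattice L] [OrderTop L] (mul imp : L → L → L)
    (hcomm : ∀ x y : L, mul x y = mul y x)
    (hone : ∀ x : L, mul x ⊤ = x)
    (hmono : ∀ a b c : L, a ≤ b → mul a c ≤ mul b c)
    (hadj : ∀ a b c : L, mul (a ⊔ b) (c ⊔ b) ≤ b ↔ c ⊔ b ≤ imp a b) :
    ∀ a b c : L, a ≤ b → imp b c ≤ imp a c := by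
  intro a b c hab
  have shrink : mul (a ⊔ c) (imp b c ⊔ c) ≤ mul (b ⊔ c) (imp b c ⊔ c) :=
    hmono _ _ _ (sup_le_sup_right hab c)
  exact le_sup_left.trans
    ((hadj a c (imp b c)).mp (shrink.trans (RelativelyResiduated.mul_imp_le hcomm hone hmono hadj b c)))
end

section
/- Every relatively residuated lattice (L,∨,∧,⊙,→,1) is weakly regular: if Θ and Φ are congruences on L such that the congruence class of 1 under Θ equals the congruence class of 1 under Φ, then Θ = Φ. -/
/-!
A congruence `Ψ` of a lattice relates `a` and `b` exactly when it relates both `a` and `b` to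
`a ⊓ b`, so it is determined by its restriction to comparable pairs `y ≤ x`. For those,
`x → x = 1` and `x ⊙ (x → y) ≤ y` give `Ψ x y ↔ Ψ (x → y) 1`, so `Ψ` is determined by the
class of `1`.
-/

/-- A congruence on a relatively residuated lattice: an equivalence relation
compatible with ∨, ∧, ⊙ and →. -/
def IsRRLCongruence {L : Type*} [Lattice L] (mul imp : L → L → L)
    (Θ : L → L → Prop) : Prop :=
  Equivalence Θ ∧
    ∀ a b c d : L, Θ a b → Θ c d →
      Θ (a ⊔ c) (b ⊔ d) ∧ Θ (a ⊓ c) (b ⊓ d) ∧ Θ (mul a c) (mul b d) ∧ Θ (imp a c) (imp b d)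

section RelativelyResiduated

variable {L : Type*} [Lattice L] [OrderTop L] {mul imp : L → L → L}

lemma imp_self_eq_top (hone : ∀ x : L, mul x ⊤ = x)
    (hadj : ∀ a b c : L, mul (a ⊔ b) (c ⊔ b) ≤ b ↔ c ⊔ b ≤ imp a b) (x : L) :
    imp x x = ⊤ := by
  have h : mul (x ⊔ x) (⊤ ⊔ x) ≤ x := by simp [hone]
  exact top_le_iff.mp (le_sup_left.trans ((hadj x x ⊤).mp h))

lemma le_imp (hcomm : ∀ x y : L, mul x y = mul y x) (hone : ∀ x : L, mul x ⊤ = x)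
    (hmono : ∀ a b c : L, a ≤ b → mul a c ≤ mul b c)
    (hadj : ∀ a b c : L, mul (a ⊔ b) (c ⊔ b) ≤ b ↔ c ⊔ b ≤ imp a b) (x y : L) :
    y ≤ imp x y := by
  have h : mul (x ⊔ y) (y ⊔ y) ≤ y :=
    calc mul (x ⊔ y) (y ⊔ y) ≤ mul ⊤ y := by rw [sup_idem]; exact hmono _ _ _ le_top
      _ = y := by rw [hcomm, hone]
  simpa using (hadj x y y).mp h

lemma mul_imp_le_of_le (hcomm : ∀ x y : L, mul x y = mul y x) (hone : ∀ x : L, mul x ⊤ = x)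
    (hmono : ∀ a b c : L, a ≤ b → mul a c ≤ mul b c)
    (hadj : ∀ a b c : L, mul (a ⊔ b) (c ⊔ b) ≤ b ↔ c ⊔ b ≤ imp a b) {x y : L}
    (hyx : y ≤ x) : mul x (imp x y) ≤ y := by
  have hy := le_imp hcomm hone hmono hadj x y
  simpa [sup_eq_left.mpr hyx, sup_eq_left.mpr hy] using (hadj x y (imp x y)).mpr (by simp [hy])

end RelativelyResiduated

namespace IsRRLCongruence

variable {L : Type*} [Lattice L] {mul imp : L → L → L} {Ψ : L → L → Prop}

lemma rel_iff_rel_inf (hΨ : IsRRLCongruence mul imp Ψ) (a b : L) :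
    Ψ a b ↔ Ψ a (a ⊓ b) ∧ Ψ b (a ⊓ b) := by
  obtain ⟨hequiv, hcompat⟩ := hΨ
  constructor
  · intro hab
    have ha := (hcompat a a a b (hequiv.refl a) hab).2.1
    have hb := (hcompat b a b b (hequiv.symm hab) (hequiv.refl b)).2.1
    rw [inf_idem] at ha hb
    exact ⟨ha, hb⟩
  · rintro ⟨ha, hb⟩
    exact hequiv.trans ha (hequiv.symm hb)

lemma rel_iff_imp_rel_top [OrderTop L] (hcomm : ∀ x y : L, mul x y = mul y x)
    (hone : ∀ x : L, mul x ⊤ = x) (hmono : ∀ a b c : L, a ≤ b → mul a c ≤ mul b c)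
    (hadj : ∀ a b c : L, mul (a ⊔ b) (c ⊔ b) ≤ b ↔ c ⊔ b ≤ imp a b)
    (hΨ : IsRRLCongruence mul imp Ψ) {x y : L} (hyx : y ≤ x) :
    Ψ x y ↔ Ψ (imp x y) ⊤ := by
  obtain ⟨hequiv, hcompat⟩ := hΨ
  constructor
  · intro hxy
    have h := (hcompat x x x y (hequiv.refl x) hxy).2.2.2
    rw [imp_self_eq_top hone hadj] at h
    exact hequiv.symm h
  · intro himp
    have hmul := (hcompat x x _ ⊤ (hequiv.refl x) himp).2.2.1
    have hsup := (hcompat _ _ y y hmul (hequiv.refl y)).1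
    rw [hone, sup_eq_right.mpr (mul_imp_le_of_le hcomm hone hmono hadj hyx),
      sup_eq_left.mpr hyx] at hsup
    exact hequiv.symm hsup

end IsRRLCongruence

/-- Every relatively residuated lattice is weakly regular:
congruences with the same class of 1 coincide. -/
theorem stmt_12 {L : Type*} [Lattice L] [OrderTop L] (mul imp : L → L → L)
    (hcomm : ∀ x y : L, mul x y = mul y x)
    (hone : ∀ x : L, mul x ⊤ = x)
    (hmono : ∀ a b c : L, a ≤ b → mul a c ≤ mul b c)
    (hadj : ∀ a b c : L, mul (a ⊔ b) (c ⊔ b) ≤ b ↔ c ⊔ b ≤ imp a b)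
    (Θ Φ : L → L → Prop)
    (hΘ : IsRRLCongruence mul imp Θ) (hΦ : IsRRLCongruence mul imp Φ)
    (hker : {x : L | Θ x ⊤} = {x : L | Φ x ⊤}) :
    Θ = Φ := by
  have hker' (x : L) : Θ x ⊤ ↔ Φ x ⊤ := Set.ext_iff.mp hker x
  funext a b
  rw [hΘ.rel_iff_rel_inf, hΦ.rel_iff_rel_inf,
    hΘ.rel_iff_imp_rel_top hcomm hone hmono hadj inf_le_left,
    hΘ.rel_iff_imp_rel_top hcomm hone hmono hadj inf_le_right,
    hΦ.rel_iff_imp_rel_top hcomm hone hmono hadj inf_le_left,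
    hΦ.rel_iff_imp_rel_top hcomm hone hmono hadj inf_le_right, hker', hker']
end

section
/- Let (L,∨,∧,1) be a lattice with greatest element 1 and let ⊙ and → be binary operations on L such that ⊙ is commutative with neutral element 1 (x⊙1 = x for all x), and for all a,b,c ∈ L: (i) ((a∨b)⊙(c∨b))→b ≤ (c∨b)→(a→b); (ii) (a∨b)⊙(a→b) ≤ b; (iii) a⊙b ≤ a⊙(b∨c); (iv) a→(a∨b) = 1. Then (L,∨,∧,⊙,→,1) is a relatively residuated lattice, i.e., ⊙ is monotone and relative adjointness holds: for all a,b,c ∈ L, (a∨b)⊙(c∨b) ≤ b if and only if c∨b ≤ a→b. -/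
/-!
Condition (iv) and condition (ii) together with `x ⊙ 1 = x` say that `a → b = 1` exactly when
`a ≤ b`. Adjointness from left to right then follows from (i): if `(a ∨ b) ⊙ (c ∨ b) ≤ b`, the
left side of (i) is `1`, hence so is `(c ∨ b) → (a → b)`. From right to left it follows from (ii)
once `⊙` is monotone, and monotonicity is (iii) read as `b ≤ c → a ⊙ b ≤ a ⊙ c`.
-/

section RelativeResiduation

variable {L : Type*} [Lattice L] {mul imp : L → L → L}

theorem mul_le_mul_right_of_le (hmul_sup : ∀ a b c : L, mul a b ≤ mul a (b ⊔ c)) {a b c : L}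
    (hbc : b ≤ c) : mul a b ≤ mul a c := by
  simpa only [sup_eq_right.mpr hbc] using hmul_sup a b c

theorem mul_le_mul_left_of_le (hcomm : ∀ x y : L, mul x y = mul y x)
    (hmul_sup : ∀ a b c : L, mul a b ≤ mul a (b ⊔ c)) {a b c : L} (hab : a ≤ b) :
    mul a c ≤ mul b c := by
  simpa only [hcomm _ c] using mul_le_mul_right_of_le hmul_sup hab

theorem imp_eq_top_iff_le [OrderTop L] (hone : ∀ x : L, mul x ⊤ = x)
    (hmp : ∀ a b : L, mul (a ⊔ b) (imp a b) ≤ b) (himp_sup : ∀ a b : L, imp a (a ⊔ b) = ⊤)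
    {a b : L} : imp a b = ⊤ ↔ a ≤ b := by
  refine ⟨fun h => ?_, fun hab => ?_⟩
  · calc a ≤ a ⊔ b := le_sup_left
      _ = mul (a ⊔ b) (imp a b) := by rw [h, hone]
      _ ≤ b := hmp a b
  · simpa only [sup_eq_right.mpr hab] using himp_sup a b

theorem le_imp_of_mul_le [OrderTop L] (hone : ∀ x : L, mul x ⊤ = x)
    (hexch : ∀ a b c : L, imp (mul (a ⊔ b) (c ⊔ b)) b ≤ imp (c ⊔ b) (imp a b))
    (hmp : ∀ a b : L, mul (a ⊔ b) (imp a b) ≤ b) (himp_sup : ∀ a b : L, imp a (a ⊔ b) = ⊤)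
    {a b c : L} (h : mul (a ⊔ b) (c ⊔ b) ≤ b) : c ⊔ b ≤ imp a b := by
  have hmul_imp : imp (mul (a ⊔ b) (c ⊔ b)) b = ⊤ := (imp_eq_top_iff_le hone hmp himp_sup).mpr h
  have hexch_top : imp (c ⊔ b) (imp a b) = ⊤ := top_le_iff.mp (hmul_imp ▸ hexch a b c)
  exact (imp_eq_top_iff_le hone hmp himp_sup).mp hexch_top

theorem mul_le_of_le_imp (hmp : ∀ a b : L, mul (a ⊔ b) (imp a b) ≤ b)
    (hmul_sup : ∀ a b c : L, mul a b ≤ mul a (b ⊔ c)) {a b c : L} (h : c ⊔ b ≤ imp a b) :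
    mul (a ⊔ b) (c ⊔ b) ≤ b :=
  (mul_le_mul_right_of_le hmul_sup h).trans (hmp a b)

end RelativeResiduation

/-- Under conditions (i)-(iv), (L,∨,∧,⊙,→,1) is a relatively
residuated lattice: ⊙ is monotone and relative adjointness holds. -/
theorem stmt_14 {L : Type*} [Lattice L] [OrderTop L] (mul imp : L → L → L)
    (hcomm : ∀ x y : L, mul x y = mul y x)
    (hone : ∀ x : L, mul x ⊤ = x)
    (h1 : ∀ a b c : L, imp (mul (a ⊔ b) (c ⊔ b)) b ≤ imp (c ⊔ b) (imp a b))
    (h2 : ∀ a b : L, mul (a ⊔ b) (imp a b) ≤ b)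
    (h3 : ∀ a b c : L, mul a b ≤ mul a (b ⊔ c))
    (h4 : ∀ a b : L, imp a (a ⊔ b) = ⊤) :
    (∀ a b c : L, a ≤ b → mul a c ≤ mul b c) ∧
      (∀ a b c : L, mul (a ⊔ b) (c ⊔ b) ≤ b ↔ c ⊔ b ≤ imp a b) :=
  ⟨fun _ _ _ => mul_le_mul_left_of_le hcomm h3,
    fun _ _ _ => ⟨le_imp_of_mul_le hone h1 h2 h4, mul_le_of_le_imp h2 h3⟩⟩
end

section
/- Let (P,≤,1) be a poset with greatest element 1 and * a binary operation on P, and define M(A,B) := L(A ∪ B) for all subsets A,B ⊆ P and R(x,y) := L({x*y}) for all x,y ∈ P. Then (P,≤,*) is a sectionally pseudocomplemented poset if and only if (P,≤,M,R,1) is a relatively operator residuated poset. -/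
/-!
With `M(A, B) = L(A ∪ B)` and `R(x, y) = L{x * y}`, commutativity and the unit law for `M` are
properties of lower bounds alone. For adjointness, note that `L(U(a,b) ∪ U(c,b))` always contains
`L{b}` (as `b` lies in both pairs), so the defining equation of the sectional pseudocomplement is
the inclusion `M(U(a,b), U(c,b)) ⊆ L{b}`; and `LU(c,b) ⊆ L{a * b}` says exactly that `a * b` is an
upper bound of `{c, b}`, since `LU` is a closure operator.
-/

open Set

section Bounds

variable {α : Type*} [Preorder α]

theorem lowerBounds_upperBounds_subset_Iic_iff {s : Set α} {x : α} :
    lowerBounds (upperBounds s) ⊆ Iic x ↔ x ∈ upperBounds s :=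
  ⟨fun h => (subset_lowerBounds_upperBounds s).trans h, fun hx _ hy => hy hx⟩

theorem Iic_subset_lowerBounds_upperBounds {s : Set α} {b : α} (hb : b ∈ s) :
    Iic b ⊆ lowerBounds (upperBounds s) :=
  fun _ hy _ hz => le_trans hy (hz hb)

theorem lowerBounds_union_upperBounds_eq_Iic_iff {s t : Set α} {b : α} (hs : b ∈ s)
    (ht : b ∈ t) :
    lowerBounds (upperBounds s ∪ upperBounds t) = Iic b ↔
      lowerBounds (upperBounds s ∪ upperBounds t) ⊆ Iic b := by
  refine ⟨Eq.subset, fun h => h.antisymm ?_⟩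
  rw [lowerBounds_union]
  exact subset_inter (Iic_subset_lowerBounds_upperBounds hs)
    (Iic_subset_lowerBounds_upperBounds ht)

theorem lowerBounds_insert_top [OrderTop α] (s : Set α) :
    lowerBounds (insert ⊤ s) = lowerBounds s := by
  rw [lowerBounds_insert, Iic_top, univ_inter]

end Bounds

/-- With M(A,B) := L(A ∪ B) and R(x,y) := L({x*y}),
(P,≤,*) is sectionally pseudocomplemented iff (P,≤,M,R,1) is a relatively
operator residuated poset. -/
theorem stmt_17 {P : Type*} [PartialOrder P] [OrderTop P] (star : P → P → P)
    (M : Set P → Set P → Set P) (R : P → P → Set P)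
    (hM : ∀ A B : Set P, M A B = lowerBounds (A ∪ B))
    (hR : ∀ x y : P, R x y = lowerBounds {star x y}) :
    (∀ a b c : P,
        lowerBounds (upperBounds {a, b} ∪ upperBounds {c, b}) = lowerBounds {b} ↔
          star a b ∈ upperBounds ({c, b} : Set P)) ↔
      ((∀ A B : Set P, M A B = M B A) ∧
       (∀ A : Set P, M {⊤} A = lowerBounds A ∧ M A {⊤} = lowerBounds A) ∧
       (∀ a b c : P,
          M (upperBounds {a, b}) (upperBounds {c, b}) ⊆ lowerBounds {b} ↔
            lowerBounds (upperBounds {c, b}) ⊆ R a b)) := by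
  have hcomm (A B : Set P) : M A B = M B A := by rw [hM, hM, union_comm]
  have hunit (A : Set P) : M {⊤} A = lowerBounds A ∧ M A {⊤} = lowerBounds A := by
    rw [hM, hM, singleton_union, union_singleton, lowerBounds_insert_top]
    exact ⟨rfl, rfl⟩
  have hadj (a b c : P) :
      (M (upperBounds {a, b}) (upperBounds {c, b}) ⊆ lowerBounds {b} ↔
        lowerBounds (upperBounds {c, b}) ⊆ R a b) ↔
      (lowerBounds (upperBounds {a, b} ∪ upperBounds {c, b}) = lowerBounds {b} ↔
        star a b ∈ upperBounds ({c, b} : Set P)) := by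
    rw [hM, hR, lowerBounds_singleton, lowerBounds_singleton,
      lowerBounds_upperBounds_subset_Iic_iff,
      lowerBounds_union_upperBounds_eq_Iic_iff (by simp) (by simp)]
  exact ⟨fun h => ⟨hcomm, hunit, fun a b c => (hadj a b c).mpr (h a b c)⟩,
    fun h a b c => (hadj a b c).mp (h.2.2 a b c)⟩
end

section
/- Let (P,≤,M,R,1) be a relatively operator residuated poset and a,b ∈ P. Then: (i) L({a}) ⊆ R(1,a); (ii) a ≤ b if and only if R(a,b) = P; (iii) M(U({a}),U(a,b)) ⊆ L({a}); (iv) L({b}) ⊆ R(a,b); (v) if P has a least element 0, then M(U({a}),U({b})) ⊆ {0} if and only if L({a}) ⊆ R(b,0). -/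
/-!
Everything follows by specialising operator relative adjointness. Taking `c = ⊤` collapses
`U(⊤, b)` to `{⊤}`, so that `M` acts as `L` on one side and the right-hand side becomes
`R a b = P`; this gives `a ≤ b ↔ R a b = P`. In particular `R a a = P`, which feeds back into
adjointness to give (iii), and (iii) together with commutativity of `M` gives (iv). Taking `b = ⊥`
collapses `U(x, ⊥)` to `U(x)` and `L(⊥)` to `{⊥}`, which is (v).
-/

section Bounds

variable {P : Type*}

theorem upperBounds_top_pair [PartialOrder P] [OrderTop P] (x : P) :
    upperBounds ({⊤, x} : Set P) = {⊤} := by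
  rw [upperBounds_insert, Set.Ici_top, upperBounds_singleton]
  exact Set.inter_eq_left.2 (Set.singleton_subset_iff.2 le_top)

theorem upperBounds_pair_bot [Preorder P] [OrderBot P] (x : P) :
    upperBounds ({x, ⊥} : Set P) = upperBounds {x} := by
  rw [Set.pair_comm, upperBounds_insert, Set.Ici_bot, Set.univ_inter]

theorem lowerBounds_upperBounds_singleton [Preorder P] (a : P) :
    lowerBounds (upperBounds ({a} : Set P)) = lowerBounds {a} := by
  rw [upperBounds_singleton, lowerBounds_Ici, lowerBounds_singleton]

theorem lowerBounds_upperBounds_pair_subset_iff [Preorder P] {a b : P} :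
    lowerBounds (upperBounds ({a, b} : Set P)) ⊆ lowerBounds {b} ↔ a ≤ b := by
  constructor
  · intro h
    exact h (subset_lowerBounds_upperBounds _ (Set.mem_insert a _)) rfl
  · intro hab x hx y hy
    rw [Set.mem_singleton_iff.1 hy]
    exact hx (by simp [upperBounds_insert, hab])

end Bounds

section RelAdjoint

variable {P : Type*} {M : Set P → Set P → Set P} {R : P → P → Set P}

def RelAdjoint [Preorder P] (M : Set P → Set P → Set P) (R : P → P → Set P) : Prop :=
  ∀ a b c : P, M (upperBounds {a, b}) (upperBounds {c, b}) ⊆ lowerBounds {b} ↔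
    lowerBounds (upperBounds {c, b}) ⊆ R a b

theorem RelAdjoint.le_iff_eq_univ [PartialOrder P] [OrderTop P]
    (hone : ∀ A : Set P, M A {⊤} = lowerBounds A) (hadj : RelAdjoint M R) {a b : P} :
    a ≤ b ↔ R a b = Set.univ := by
  have h := hadj a b ⊤
  rwa [upperBounds_top_pair, hone, lowerBounds_upperBounds_pair_subset_iff,
    lowerBounds_singleton, Set.Iic_top, Set.univ_subset_iff] at h

theorem RelAdjoint.mul_subset_lowerBounds [PartialOrder P] [OrderTop P]
    (hone : ∀ A : Set P, M A {⊤} = lowerBounds A) (hadj : RelAdjoint M R) (a b : P) :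
    M (upperBounds {a}) (upperBounds {a, b}) ⊆ lowerBounds {a} := by
  have h := (hadj a a b).2 (((hadj.le_iff_eq_univ hone).1 le_rfl).symm ▸ Set.subset_univ _)
  rwa [Set.pair_eq_singleton, Set.pair_comm] at h

theorem RelAdjoint.lowerBounds_subset [PartialOrder P] [OrderTop P]
    (hcomm : ∀ A B : Set P, M A B = M B A) (hone : ∀ A : Set P, M A {⊤} = lowerBounds A)
    (hadj : RelAdjoint M R) (a b : P) :
    lowerBounds {b} ⊆ R a b := by
  have hM : M (upperBounds {a, b}) (upperBounds {b, b}) ⊆ lowerBounds {b} := by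
    rw [Set.pair_eq_singleton, hcomm, Set.pair_comm]
    exact hadj.mul_subset_lowerBounds hone b a
  simpa only [Set.pair_eq_singleton, lowerBounds_upperBounds_singleton] using (hadj a b b).1 hM

theorem RelAdjoint.mul_subset_bot_iff [PartialOrder P] [OrderBot P]
    (hcomm : ∀ A B : Set P, M A B = M B A) (hadj : RelAdjoint M R) (a b : P) :
    M (upperBounds {a}) (upperBounds {b}) ⊆ {⊥} ↔ lowerBounds {a} ⊆ R b ⊥ := by
  have h := hadj b ⊥ a
  rwa [upperBounds_pair_bot, upperBounds_pair_bot, lowerBounds_upperBounds_singleton,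
    lowerBounds_singleton, Set.Iic_bot, hcomm] at h

end RelAdjoint

/-- Properties of relatively operator residuated posets. -/
theorem stmt_18 {P : Type*} [PartialOrder P] [OrderTop P]
    (M : Set P → Set P → Set P) (R : P → P → Set P)
    (hcomm : ∀ A B : Set P, M A B = M B A)
    (hone : ∀ A : Set P, M {⊤} A = lowerBounds A ∧ M A {⊤} = lowerBounds A)
    (hadj : ∀ a b c : P,
      M (upperBounds {a, b}) (upperBounds {c, b}) ⊆ lowerBounds {b} ↔
        lowerBounds (upperBounds {c, b}) ⊆ R a b)
    (a b : P) :
    lowerBounds {a} ⊆ R ⊤ a ∧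
    (a ≤ b ↔ R a b = Set.univ) ∧
    M (upperBounds {a}) (upperBounds {a, b}) ⊆ lowerBounds {a} ∧
    lowerBounds {b} ⊆ R a b ∧
    (∀ _ : OrderBot P,
      (M (upperBounds {a}) (upperBounds {b}) ⊆ {⊥} ↔ lowerBounds {a} ⊆ R b ⊥)) := by
  have hadj' : RelAdjoint M R := hadj
  have hone' : ∀ A : Set P, M A {⊤} = lowerBounds A := fun A => (hone A).2
  exact ⟨hadj'.lowerBounds_subset hcomm hone' ⊤ a, hadj'.le_iff_eq_univ hone',
    hadj'.mul_subset_lowerBounds hone' a b, hadj'.lowerBounds_subset hcomm hone' a b,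
    fun _ => hadj'.mul_subset_bot_iff hcomm a b⟩
end
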